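/- Sequential consistency does not guarantee contextual trace refinement, witnessed by the following unreachability fact for the client of Example 2 running against the atomic (abstract) stack: consider a state consisting of a stack S : List ℕ (initially empty) and variables x, y, z, out₁, out₂ : ℕ (initially 0). Thread 1 consists of the atomic actions A1: push 1 (S := 1 :: S); A2: push 2 (S := 2 :: S); A3: out₁ := pop (out₁ := head of S, S := tail of S; if S is empty then out₁ := 0); A4: x := out₁. Thread 2 consists of B1: z := 1; B2: out₂ := pop (out₂ := head of S, S := tail of S; if S is empty then out₂ := 0); B3: y := out₂. Then no interleaving of the sequences [A1, A2, A3, A4] and [B1, B2, B3] (an interleaving being any shuffle preserving each thread's order, executed sequentially from the initial state) produces the observable trace ⟨(0,0,0), (1,0,0), (1,0,1), (1,2,1)⟩ of values of (x, y, z), where the observable trace records the initial value of (x, y, z) followed by its value after each action that changes (x, y, z). -/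
import Mathlib


/-- Combined state of the client and the atomic (abstract) stack:
the stack contents `S` and client variables `x`, `y`, `z`, `out₁`, `out₂`. -/
structure CState : Type where
  S : List ℕ
  x : ℕ
  y : ℕ
  z : ℕ
  out1 : ℕ
  out2 : ℕ
  deriving DecidableEq

/-- Interleaving (shuffle) of two lists, preserving each list's order. -/
inductive Interleave {α : Type*} : List α → List α → List α → Prop
  | nil : Interleave [] [] []
  | left {a : α} {l₁ l₂ l : List α} :
      Interleave l₁ l₂ l → Interleave (a :: l₁) l₂ (a :: l)
  | right {a : α} {l₁ l₂ l : List α} :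
      Interleave l₁ l₂ l → Interleave l₁ (a :: l₂) (a :: l)

/-- Thread 1: `A1`: `s.push(1)`; `A2`: `s.push(2)`; `A3`: `out₁ := s.pop()`
(pop of the empty stack returns `0`); `A4`: `x := out₁`. -/
def thread1 : List (CState → CState) :=
  [fun s => { s with S := 1 :: s.S },
   fun s => { s with S := 2 :: s.S },
   fun s => match s.S with
            | [] => { s with out1 := 0 }
            | a :: S' => { s with out1 := a, S := S' },
   fun s => { s with x := s.out1 }]

/-- Thread 2: `B1`: `z := 1`; `B2`: `out₂ := s.pop()` (pop of the empty
stack returns `0`); `B3`: `y := out₂`. -/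
def thread2 : List (CState → CState) :=
  [fun s => { s with z := 1 },
   fun s => match s.S with
            | [] => { s with out2 := 0 }
            | a :: S' => { s with out2 := a, S := S' },
   fun s => { s with y := s.out2 }]

/-- Initial state: empty stack, all client variables `0`. -/
def initState : CState := ⟨[], 0, 0, 0, 0, 0⟩

/-- Observable part of the state: the values of `(x, y, z)`. -/
def obs (s : CState) : ℕ × ℕ × ℕ := (s.x, s.y, s.z)

/-- Observable trace of an execution: the value of `(x, y, z)` initially and
after each action that changes it (stuttering steps omitted). -/
def obsTrace (s₀ : CState) (l : List (CState → CState)) : List (ℕ × ℕ × ℕ) :=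
  ((l.scanl (fun s a => a s) s₀).map obs).destutter (· ≠ ·)

/-- **Sequential consistency does not guarantee contextual trace
refinement**: for the client of Example 2 running against the atomic
(abstract) stack, no interleaving of the two threads produces the observable
trace `⟨(0,0,0), (1,0,0), (1,0,1), (1,2,1)⟩` of values of `(x, y, z)` —
a trace which the sequentially consistent implementation can produce. -/
theorem no_interleaving_produces_sc_trace :
    ∀ l : List (CState → CState), Interleave thread1 thread2 l →
      obsTrace initState l ≠ [(0, 0, 0), (1, 0, 0), (1, 0, 1), (1, 2, 1)] := by
  intro l h
  unfold thread1 thread2 at h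
  casesm* Interleave _ _ _
  all_goals decide
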